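/- Let Δ denote the set of lattice roots of Γ^{2,2} and let S ⊆ Δ be any subset such that for every root α ∈ Δ, either α ∈ S or -α ∈ S (a splitting of the roots into positive and negative ones). Then the set D = {γ ∈ ℝ⁴ : B(α,γ) ≥ 0 for all α ∈ S} has empty interior. In particular, any potential fundamental domain for the reflection group of Γ^{2,2} acting on ℝ⁴ has empty interior. -/

import Mathlib

/-- The bilinear form of `Γ^{2,2}` extended ℝ-bilinearly to `ℝ⁴`. -/
def GammaBR (x y : EuclideanSpace ℝ (Fin 4)) : ℝ :=
  -(x 0 * y 1 + x 1 * y 0) - (x 2 * y 3 + x 3 * y 2)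

/-- A lattice root of `Γ^{2,2}`: an element `(k,l,m,n)` with `kl + mn = -1`,
equivalently of norm `B(α,α) = 2`. -/
def IsLatticeRoot (α : Fin 4 → ℤ) : Prop :=
  α 0 * α 1 + α 2 * α 3 = -1

/-! If `c` were an interior point of `D`, with `closedBall c δ ⊆ D`, then for every root `α`
the functional `B(α, ·)` would have constant sign on the ball (as `α` or `-α` lies in `S`),
whence `δ |αᵢ| ≤ |B(α, c)|`. For coprime `p, q` the isotropic vector `v = (p, q, p, -q)` spans a
line `β + ℕ v` of roots, and letting `n → ∞` along it gives
`δ max(|p|, |q|) ≤ |B(v, c)| = |p (c₁ + c₃) + q (c₀ - c₂)|`. Dirichlet's approximation theorem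
produces coprime `p, q` violating this. -/

open Metric Filter

theorem mul_abs_le_abs_of_forall_nat {s a b x y : ℝ}
    (h : ∀ n : ℕ, s * |a + n * b| ≤ |x + n * y|) : s * |b| ≤ |y| := by
  have hdiv : ∀ n : ℕ, 1 ≤ n → s * |a / n + b| ≤ |x / n + y| := fun n hn => by
    have hn' : (0 : ℝ) < n := by exact_mod_cast hn
    rw [div_add' _ _ _ hn'.ne', div_add' _ _ _ hn'.ne', abs_div, abs_div, abs_of_pos hn',
      ← mul_div_assoc]
    gcongr
    simpa only [mul_comm] using h n
  simpa using le_of_tendsto_of_tendsto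
    (((tendsto_const_div_atTop_nhds_zero_nat a).add_const b).abs.const_mul s)
    ((tendsto_const_div_atTop_nhds_zero_nat x).add_const y).abs
    (eventually_atTop.2 ⟨1, hdiv⟩)

theorem abs_le_abs_of_sign_on_closedBall {E : Type*} [SeminormedAddCommGroup E] (f : E →+ ℝ)
    {c : E} {δ : ℝ} (hf : (∀ x ∈ closedBall c δ, 0 ≤ f x) ∨ ∀ x ∈ closedBall c δ, f x ≤ 0)
    {v : E} (hv : ‖v‖ ≤ δ) : |f v| ≤ |f c| := by
  have hadd : c + v ∈ closedBall c δ := by simpa [dist_eq_norm] using hv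
  have hsub : c - v ∈ closedBall c δ := by simpa [dist_eq_norm] using hv
  rcases hf with hf | hf <;>
  · have h₁ := hf _ hadd
    have h₂ := hf _ hsub
    rw [map_add] at h₁
    rw [map_sub] at h₂
    exact abs_le.2 ⟨by linarith [le_abs_self (f c), neg_abs_le (f c)],
      by linarith [le_abs_self (f c), neg_abs_le (f c)]⟩

theorem exists_isCoprime_abs_mul_add_mul_lt (A B : ℝ) {δ : ℝ} (hδ : 0 < δ) :
    ∃ p q : ℤ, IsCoprime p q ∧ |p * A + q * B| < δ * max |(p : ℝ)| |(q : ℝ)| := by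
  rcases eq_or_ne A 0 with rfl | hA
  · exact ⟨1, 0, isCoprime_one_left, by simpa using hδ⟩
  obtain ⟨n, hn⟩ := exists_nat_gt (|A| / δ)
  have hn0 : 0 < n := by exact_mod_cast (div_pos (abs_pos.2 hA) hδ).trans hn
  obtain ⟨r, hr, -⟩ := Real.exists_rat_abs_sub_le_and_den_le (-(B / A)) hn0
  refine ⟨r.num, r.den, r.isCoprime_num_den, ?_⟩
  have hden : (1 : ℝ) ≤ r.den := by exact_mod_cast r.den_pos
  have key : (r.num : ℝ) * A + (r.den : ℤ) * B = -(A * r.den * (-(B / A) - r)) := by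
    rw [Rat.cast_def]; push_cast; field_simp; ring
  calc |(r.num : ℝ) * A + (r.den : ℤ) * B| = |A| * r.den * |-(B / A) - r| := by
        rw [key, abs_neg, abs_mul, abs_mul, Nat.abs_cast]
    _ ≤ |A| * r.den * (1 / ((n + 1) * r.den)) := by gcongr
    _ = |A| / (n + 1) := by field_simp
    _ < δ := by rw [div_lt_iff₀ (by positivity)]; rw [div_lt_iff₀ hδ] at hn; nlinarith
    _ ≤ δ * max |(r.num : ℝ)| |((r.den : ℤ) : ℝ)| := by
        refine le_mul_of_one_le_right hδ.le (le_max_of_le_right ?_); simpa using hden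

def gammaBRRight (x : EuclideanSpace ℝ (Fin 4)) : EuclideanSpace ℝ (Fin 4) →+ ℝ :=
  AddMonoidHom.mk' (GammaBR x) fun y z => by simp only [GammaBR, PiLp.add_apply]; ring

def gammaBRIntLeft (c : EuclideanSpace ℝ (Fin 4)) : (Fin 4 → ℤ) →+ ℝ :=
  AddMonoidHom.mk' (fun α => GammaBR (WithLp.toLp 2 fun i => (α i : ℝ)) c) fun α β => by
    simp only [GammaBR, Pi.add_apply, Int.cast_add]; ring

def dualCone (S : Set (Fin 4 → ℤ)) : Set (EuclideanSpace ℝ (Fin 4)) :=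
  {γ | ∀ α ∈ S, 0 ≤ GammaBR (WithLp.toLp 2 fun i => (α i : ℝ)) γ}

theorem mul_abs_apply_le_abs_GammaBR {x c : EuclideanSpace ℝ (Fin 4)} {δ : ℝ} (hδ : 0 ≤ δ)
    (h : ∀ v : EuclideanSpace ℝ (Fin 4), ‖v‖ ≤ δ → |GammaBR x v| ≤ |GammaBR x c|) (i : Fin 4) :
    δ * |x i| ≤ |GammaBR x c| := by
  obtain ⟨j, hj⟩ : ∃ j : Fin 4, GammaBR x (EuclideanSpace.single j δ) = -(x i * δ) := by
    fin_cases i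
    exacts [⟨1, by simp [GammaBR]⟩, ⟨0, by simp [GammaBR]⟩, ⟨3, by simp [GammaBR]⟩,
      ⟨2, by simp [GammaBR]⟩]
  have hnorm : ‖EuclideanSpace.single j δ‖ ≤ δ := by simp [abs_of_nonneg hδ]
  simpa [hj, abs_mul, abs_of_nonneg hδ, mul_comm] using h _ hnorm

theorem mul_abs_le_gammaBRIntLeft_of_closedBall_subset {S : Set (Fin 4 → ℤ)}
    (hsplit : ∀ α : Fin 4 → ℤ, IsLatticeRoot α → α ∈ S ∨ -α ∈ S)
    {c : EuclideanSpace ℝ (Fin 4)} {δ : ℝ} (hδ : 0 ≤ δ) (hball : closedBall c δ ⊆ dualCone S)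
    {α : Fin 4 → ℤ} (hα : IsLatticeRoot α) (i : Fin 4) :
    δ * |(α i : ℝ)| ≤ |gammaBRIntLeft c α| := by
  refine mul_abs_apply_le_abs_GammaBR (x := WithLp.toLp 2 fun i => (α i : ℝ)) hδ
    (fun v hv => ?_) i
  refine abs_le_abs_of_sign_on_closedBall (gammaBRRight _) ?_ hv
  refine (hsplit α hα).imp (fun hS x hx => hball hx α hS) (fun hS x hx => ?_)
  have := hball hx (-α) hS
  simp only [GammaBR, Pi.neg_apply, Int.cast_neg] at this
  simp only [gammaBRRight, AddMonoidHom.mk'_apply, GammaBR]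
  linarith

theorem exists_isLatticeRoot_add_nsmul {p q : ℤ} (hpq : IsCoprime p q) :
    ∃ β : Fin 4 → ℤ, ∀ n : ℕ, IsLatticeRoot (β + n • ![p, q, p, -q]) := by
  -- `β` must satisfy `B(β, v) = 0` and `B(β, β) = 2`; taking `β₀ = β₂ + p`, `β₁ = -β₃ - q` reduces
  -- this to `q β₂ + p β₃ = 1 - p q`, which Bezout solves.
  obtain ⟨a, b, hab⟩ := hpq
  refine ⟨![b * (1 - p * q) + p, -q - a * (1 - p * q), b * (1 - p * q), a * (1 - p * q)],
    fun n => ?_⟩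
  simp only [IsLatticeRoot, Matrix.smul_cons, Int.nsmul_eq_mul, Matrix.smul_empty, Pi.add_apply,
    Matrix.cons_val_zero, Matrix.cons_val_one, Matrix.cons_val]
  linear_combination (-(1 - p * q)) * hab

theorem fundamental_domain_empty_interior_general (S : Set (Fin 4 → ℤ))
    (hsplit : ∀ α : Fin 4 → ℤ, IsLatticeRoot α → α ∈ S ∨ -α ∈ S) :
    interior {γ : EuclideanSpace ℝ (Fin 4) |
      ∀ α ∈ S, 0 ≤ GammaBR (WithLp.toLp 2 (fun i => (α i : ℝ))) γ} = ∅ := by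
  refine Set.eq_empty_iff_forall_notMem.2 fun c hc => ?_
  obtain ⟨δ, hδ, hball⟩ := nhds_basis_closedBall.mem_iff.1 (mem_interior_iff_mem_nhds.1 hc)
  obtain ⟨p, q, hpq, hlt⟩ := exists_isCoprime_abs_mul_add_mul_lt (c 1 + c 3) (c 0 - c 2) hδ
  obtain ⟨β, hβ⟩ := exists_isLatticeRoot_add_nsmul hpq
  have hline (i : Fin 4) :
      δ * |((![p, q, p, -q] i : ℤ) : ℝ)| ≤ |gammaBRIntLeft c ![p, q, p, -q]| := by
    refine mul_abs_le_abs_of_forall_nat (a := β i) (x := gammaBRIntLeft c β) fun n => ?_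
    have := mul_abs_le_gammaBRIntLeft_of_closedBall_subset hsplit hδ.le hball (hβ n) i
    rw [map_add, map_nsmul, Pi.add_apply, Pi.smul_apply] at this
    simpa only [nsmul_eq_mul, Int.cast_add, Int.cast_mul, Int.cast_natCast] using this
  have hval : gammaBRIntLeft c ![p, q, p, -q] = -(p * (c 1 + c 3) + q * (c 0 - c 2)) := by
    simp only [gammaBRIntLeft, GammaBR, AddMonoidHom.mk'_apply, Matrix.cons_val_zero,
      Matrix.cons_val_one, Matrix.cons_val, Int.cast_neg]
    ring
  have hp := hline 0
  have hq := hline 1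
  simp only [hval, abs_neg] at hp hq
  exact hlt.not_ge (by rw [mul_max_of_nonneg _ _ hδ.le]; simpa using And.intro hp hq)

/-- For any splitting of the lattice roots of `Γ^{2,2}` into positive and
negative ones (`S` contains `α` or `-α` for every root `α`), the candidate
fundamental domain `D = {γ ∈ ℝ⁴ : B(α,γ) ≥ 0 for all α ∈ S}` has empty
interior. -/
theorem fundamental_domain_empty_interior (S : Set (Fin 4 → ℤ))
    (hS : ∀ α ∈ S, IsLatticeRoot α)
    (hsplit : ∀ α : Fin 4 → ℤ, IsLatticeRoot α → α ∈ S ∨ -α ∈ S) :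
    interior {γ : EuclideanSpace ℝ (Fin 4) |
      ∀ α ∈ S, 0 ≤ GammaBR (WithLp.toLp 2 (fun i => (α i : ℝ))) γ} = ∅ :=
  fundamental_domain_empty_interior_general S hsplit
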